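/- arXiv:2403.08620 — 4 statements merged into one kernel-verified Lean document; each statement's English description precedes it below -/
import Mathlib

section
/- Let k ≥ 1 and let a_1, …, a_k be nonnegative reals satisfying 2a_1 - a_2 ≥ 0, 2a_i - a_{i-1} - a_{i+1} ≥ 0 for 2 ≤ i ≤ k-1, and 2a_k - a_{k-1} ≥ 0. Then a_1 + a_k ≤ (k+1)·min(a_1, …, a_k). -/
/-!
Extended by `a 0 = a (k + 1) = 0`, the sequence is concave on `{0, …, k + 1}`, so its increments
decrease. Summing increments from either end gives `a k ≤ k * a 1` and `a 1 ≤ k * a k`, and a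
concave sequence attains its minimum over `[1, k]` at an endpoint. Hence
`a 1 + a k ≤ (k + 1) * min (a 1) (a k) = (k + 1) * min a`.
-/

section

variable {R : Type*} [Field R] [LinearOrder R] [IsStrictOrderedRing R] {f : ℕ → R} {n : ℕ}

def SeqConcaveOn (f : ℕ → R) (n : ℕ) : Prop :=
  ∀ i, i + 2 ≤ n → f i + f (i + 2) ≤ 2 * f (i + 1)

namespace SeqConcaveOn

theorem antitoneOn_sub (hf : SeqConcaveOn f n) :
    AntitoneOn (fun i => f (i + 1) - f i) (Set.Iio n) :=
  antitoneOn_of_add_one_le Set.ordConnected_Iio fun i _ _ hi => by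
    have := hf i (Set.mem_Iio.mp hi)
    linarith

theorem sub_le_mul (hf : SeqConcaveOn f n) {j : ℕ} (hj : j ≤ n) :
    f j - f 0 ≤ j * (f 1 - f 0) := by
  induction j with
  | zero => simp
  | succ j ih =>
    have hstep : f (j + 1) - f j ≤ f (0 + 1) - f 0 :=
      hf.antitoneOn_sub (Set.mem_Iio.mpr (by omega)) (Set.mem_Iio.mpr (by omega)) (Nat.zero_le j)
    push_cast
    linarith [ih (by omega)]

theorem reflect (hf : SeqConcaveOn f n) : SeqConcaveOn (fun i => f (n - i)) n := by
  intro i hi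
  have := hf (n - (i + 2)) (by omega)
  rw [show n - (i + 2) + 2 = n - i by omega, show n - (i + 2) + 1 = n - (i + 1) by omega] at this
  linarith

theorem min_le (hf : SeqConcaveOn f n) {l m r : ℕ} (hlm : l ≤ m) (hmr : m ≤ r) (hrn : r ≤ n) :
    min (f l) (f r) ≤ f m := by
  obtain rfl | hmr := hmr.eq_or_lt
  · exact min_le_right _ _
  -- A nonpositive increment at `m` makes `f` decrease on `[m, r]`, a positive one makes it
  -- increase on `[l, m]`.
  rcases le_or_gt (f (m + 1) - f m) 0 with hdec | hinc
  · refine min_le_of_right_le <|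
      antitoneOn_of_add_one_le (s := Set.Icc m r) Set.ordConnected_Icc (fun i _ hi hi1 => ?_)
        (Set.left_mem_Icc.mpr hmr.le) (Set.right_mem_Icc.mpr hmr.le) hmr.le
    have := hf.antitoneOn_sub (a := m) (b := i) (Set.mem_Iio.mpr (by omega))
      (Set.mem_Iio.mpr (by grind)) hi.1
    dsimp only at this
    linarith
  · refine min_le_of_left_le <|
      monotoneOn_of_le_add_one (s := Set.Icc l m) Set.ordConnected_Icc (fun i _ hi hi1 => ?_)
        (Set.left_mem_Icc.mpr hlm) (Set.right_mem_Icc.mpr hlm) hlm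
    have := hf.antitoneOn_sub (a := i) (b := m) (Set.mem_Iio.mpr (by grind))
      (Set.mem_Iio.mpr (by omega)) hi.2
    dsimp only at this
    linarith

end SeqConcaveOn

theorem seqConcaveOn_indicator_Icc {k : ℕ} {a : ℕ → R} (ha1 : 0 ≤ a 1)
    (h1 : 2 * a 1 - a 2 ≥ 0)
    (hmid : ∀ i, 2 ≤ i → i ≤ k - 1 → 2 * a i - a (i - 1) - a (i + 1) ≥ 0)
    (hk : 2 * a k - a (k - 1) ≥ 0) :
    SeqConcaveOn ((Set.Icc 1 k).indicator a) (k + 1) := by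
  have hin : ∀ j, 1 ≤ j → j ≤ k → (Set.Icc 1 k).indicator a j = a j :=
    fun j h1j hjk => Set.indicator_of_mem (Set.mem_Icc.mpr ⟨h1j, hjk⟩) a
  have hout : ∀ j, j = 0 ∨ k < j → (Set.Icc 1 k).indicator a j = 0 :=
    fun j hj => Set.indicator_of_notMem (by simp only [Set.mem_Icc]; omega) a
  intro i hi
  obtain rfl | hi0 := i.eq_zero_or_pos
  · rw [hout 0 (by omega), hin 1 le_rfl (by omega)]
    obtain rfl | hk2 := (show k = 1 ∨ 2 ≤ k by omega)
    · rw [hout 2 (by omega)]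
      linarith
    · rw [hin 2 (by omega) hk2]
      linarith
  rw [hin i hi0 (by omega), hin (i + 1) (by omega) (by omega)]
  obtain rfl | hik := (show k = i + 1 ∨ i + 2 ≤ k by omega)
  · rw [hout (i + 2) (by omega)]
    simpa using hk
  · have := hmid (i + 1) (by omega) (by omega)
    rw [hin (i + 2) (by omega) hik]
    simp only [Nat.add_sub_cancel] at this
    linarith

end

theorem stmt1 (k : ℕ) (hk : 1 ≤ k) (a : ℕ → ℝ)
    (hnn : ∀ i, 1 ≤ i → i ≤ k → 0 ≤ a i)
    (h1 : 2 * a 1 - a 2 ≥ 0)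
    (hmid : ∀ i, 2 ≤ i → i ≤ k - 1 → 2 * a i - a (i - 1) - a (i + 1) ≥ 0)
    (hk' : 2 * a k - a (k - 1) ≥ 0)
    (hne : (Finset.Icc 1 k).Nonempty) :
    a 1 + a k ≤ (k + 1 : ℝ) * (Finset.Icc 1 k).inf' hne a := by
  have hb := seqConcaveOn_indicator_Icc (hnn 1 le_rfl hk) h1 hmid hk'
  have hb_eq : ∀ i ∈ Set.Icc 1 k, (Set.Icc 1 k).indicator a i = a i :=
    fun i hi => Set.indicator_of_mem hi a
  have hb1 := hb_eq 1 ⟨le_rfl, hk⟩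
  have hbk := hb_eq k ⟨hk, le_rfl⟩
  have hk_le : a k ≤ k * a 1 := by
    simpa [hb1, hbk] using hb.sub_le_mul (j := k) (by omega)
  have h1_le : a 1 ≤ k * a k := by
    simpa [hb1, hbk] using hb.reflect.sub_le_mul (j := k) (by omega)
  have hmin : min (a 1) (a k) ≤ (Finset.Icc 1 k).inf' hne a :=
    Finset.le_inf' hne a fun m hm => by
      obtain ⟨h1m, hmk⟩ := Finset.mem_Icc.mp hm
      simpa [hb1, hbk, hb_eq m ⟨h1m, hmk⟩] using hb.min_le h1m hmk (by omega)
  calc a 1 + a k ≤ (k + 1 : ℝ) * min (a 1) (a k) := by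
        rw [mul_min_of_nonneg _ _ (by positivity)]
        exact le_min (by linarith) (by linarith)
    _ ≤ (k + 1 : ℝ) * (Finset.Icc 1 k).inf' hne a := by gcongr
end

section
/- Let k ≥ 4 and let a_1, …, a_k be nonnegative reals satisfying: 2a_1 - a_2 ≥ 0; 2a_i - a_{i-1} - a_{i+1} ≥ 0 for 2 ≤ i ≤ k-3; 2a_{k-2} - a_{k-3} - a_{k-1} - a_k ≥ 0; 2a_{k-1} - a_{k-2} ≥ 0; 2a_k - a_{k-2} ≥ 0. Then min(2a_1, a_2, …, a_{k-2}, 2a_{k-1}, 2a_k) = a_2, i.e., a_2 ≤ 2a_1, a_2 ≤ a_i for 3 ≤ i ≤ k-2, a_2 ≤ 2a_{k-1}, and a_2 ≤ 2a_k. -/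
/-! The branch inequality at `E_{k-2}`, combined with `2a_{k-1} ≥ a_{k-2}` and `2a_k ≥ a_{k-2}`,
gives `a_{k-3} ≤ a_{k-2}`. Along the chain the increments `a_{i+1} - a_i` are nonincreasing, so
they are all nonnegative and `a` is monotone on `1, …, k-2`; in particular `a_2 ≤ a_i` there and
`a_2 ≤ a_{k-2} ≤ 2a_{k-1}, 2a_k`. -/

theorem monotoneOn_Icc_of_concave_of_le {a : ℕ → ℝ} {m n : ℕ}
    (hconc : ∀ i, m ≤ i → i < n → a (i + 2) - a (i + 1) ≤ a (i + 1) - a i)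
    (hlast : a n ≤ a (n + 1)) : MonotoneOn a (Set.Icc m (n + 1)) := by
  have step : ∀ i, m ≤ i → i ≤ n → a i ≤ a (i + 1) := by
    intro i hmi hin
    refine Nat.decreasingInduction' (P := fun j => a j ≤ a (j + 1)) ?_ hin hlast
    intro j hjn hij ih
    linarith [hconc j (hmi.trans hij) hjn]
  exact monotoneOn_of_le_add_one Set.ordConnected_Icc fun i _ hi hi1 =>
    step i hi.1 (Nat.le_of_succ_le_succ hi1.2)

theorem stmt3_general (k : ℕ) (hk : 4 ≤ k) (a : ℕ → ℝ)
    (h1 : 2 * a 1 - a 2 ≥ 0)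
    (hmid : ∀ i, 2 ≤ i → i ≤ k - 3 → 2 * a i - a (i - 1) - a (i + 1) ≥ 0)
    (hbr : 2 * a (k - 2) - a (k - 3) - a (k - 1) - a k ≥ 0)
    (hk1 : 2 * a (k - 1) - a (k - 2) ≥ 0)
    (hk2 : 2 * a k - a (k - 2) ≥ 0) :
    a 2 ≤ 2 * a 1 ∧ (∀ i, 3 ≤ i → i ≤ k - 2 → a 2 ≤ a i) ∧
      a 2 ≤ 2 * a (k - 1) ∧ a 2 ≤ 2 * a k := by
  obtain ⟨n, rfl⟩ : ∃ n, k = n + 3 := ⟨k - 3, by omega⟩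
  simp only [Nat.add_sub_cancel, show n + 3 - 2 = n + 1 by omega,
    show n + 3 - 1 = n + 2 by omega] at hmid hbr hk1 hk2 ⊢
  have hconc : ∀ i, 1 ≤ i → i < n → a (i + 2) - a (i + 1) ≤ a (i + 1) - a i := by
    intro i hi hin
    have := hmid (i + 1) (by omega) (by omega)
    simp only [Nat.add_sub_cancel] at this
    linarith
  have hbranch : a n ≤ a (n + 1) := by linarith
  have hmono := monotoneOn_Icc_of_concave_of_le hconc hbranch
  have h2i : ∀ i, 2 ≤ i → i ≤ n + 1 → a 2 ≤ a i := fun i h2 hi =>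
    hmono ⟨by norm_num, by omega⟩ ⟨by omega, hi⟩ h2
  have h2top := h2i (n + 1) (by omega) le_rfl
  exact ⟨by linarith, fun i h3 hi => h2i i (by omega) hi, by linarith, by linarith⟩

theorem stmt3 (k : ℕ) (hk : 4 ≤ k) (a : ℕ → ℝ)
    (hnn : ∀ i, 1 ≤ i → i ≤ k → 0 ≤ a i)
    (h1 : 2 * a 1 - a 2 ≥ 0)
    (hmid : ∀ i, 2 ≤ i → i ≤ k - 3 → 2 * a i - a (i - 1) - a (i + 1) ≥ 0)
    (hbr : 2 * a (k - 2) - a (k - 3) - a (k - 1) - a k ≥ 0)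
    (hk1 : 2 * a (k - 1) - a (k - 2) ≥ 0)
    (hk2 : 2 * a k - a (k - 2) ≥ 0) :
    a 2 ≤ 2 * a 1 ∧ (∀ i, 3 ≤ i → i ≤ k - 2 → a 2 ≤ a i) ∧
      a 2 ≤ 2 * a (k - 1) ∧ a 2 ≤ 2 * a k :=
  stmt3_general k hk a h1 hmid hbr hk1 hk2
end

section
/- Let a_1, …, a_6 be nonnegative reals satisfying the E_6 inequalities: 2a_1 ≥ a_2; 2a_2 ≥ a_1 + a_3; 2a_3 ≥ a_2 + a_4 + a_5; 2a_4 ≥ a_3; 2a_5 ≥ a_3 + a_6; 2a_6 ≥ a_5. Then min(2a_1, a_2, 2a_3/3, a_4, a_5, 2a_6) = a_4. -/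
/-! On each two-node arm x – y of the E₆ graph ending at the branch node c, the inequalities
`2x ≥ y` and `2y ≥ x + c` force `y ≥ 2c/3`. Feeding both arms into the inequality at the branch
node gives `a4 ≤ 2a3/3 ≤ a2, a5`, and the end nodes satisfy `2a1 ≥ a2`, `2a6 ≥ a5`. -/

lemma two_mul_div_three_le_of_arm {x y c : ℝ} (hx : 2 * x ≥ y) (hy : 2 * y ≥ x + c) :
    2 * c / 3 ≤ y := by
  linarith

theorem stmt5_general (a1 a2 a3 a4 a5 a6 : ℝ)
    (h1 : 2 * a1 ≥ a2) (h2 : 2 * a2 ≥ a1 + a3) (h3 : 2 * a3 ≥ a2 + a4 + a5)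
    (h5 : 2 * a5 ≥ a3 + a6) (h6 : 2 * a6 ≥ a5) :
    min (2 * a1) (min a2 (min (2 * a3 / 3) (min a4 (min a5 (2 * a6))))) = a4 := by
  have ha2 : 2 * a3 / 3 ≤ a2 := two_mul_div_three_le_of_arm h1 h2
  have ha5 : 2 * a3 / 3 ≤ a5 := two_mul_div_three_le_of_arm h6 (by linarith)
  have ha4 : a4 ≤ 2 * a3 / 3 := by linarith
  refine le_antisymm ?_ ?_
  · exact min_le_of_right_le <| min_le_of_right_le <| min_le_of_right_le <| min_le_left _ _
  · exact le_min (by linarith) (le_min (by linarith) (le_min ha4 (le_min le_rfl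
      (le_min (by linarith) (by linarith)))))

theorem stmt5 (a1 a2 a3 a4 a5 a6 : ℝ)
    (hnn : 0 ≤ a1 ∧ 0 ≤ a2 ∧ 0 ≤ a3 ∧ 0 ≤ a4 ∧ 0 ≤ a5 ∧ 0 ≤ a6)
    (h1 : 2 * a1 ≥ a2) (h2 : 2 * a2 ≥ a1 + a3) (h3 : 2 * a3 ≥ a2 + a4 + a5)
    (h4 : 2 * a4 ≥ a3) (h5 : 2 * a5 ≥ a3 + a6) (h6 : 2 * a6 ≥ a5) :
    min (2 * a1) (min a2 (min (2 * a3 / 3) (min a4 (min a5 (2 * a6))))) = a4 :=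
  stmt5_general a1 a2 a3 a4 a5 a6 h1 h2 h3 h5 h6
end

section
/- There exists a constant C such that for all (u,v) in the unit ball of ℂ², (k+1)·log√(|u|² + |v|²) ≤ (1/2)·log(|u|^{2(k+1)} + |v|^{2(k+1)} + |uv|²) + C. -/
theorem stmt16 (k : ℕ) (hk : 1 ≤ k) :
    ∃ C : ℝ, ∀ u v : ℂ, ‖u‖ ^ 2 + ‖v‖ ^ 2 ≤ 1 →
      ((k : ℝ) + 1) * Real.log (Real.sqrt (‖u‖ ^ 2 + ‖v‖ ^ 2)) ≤
        (1 / 2) * Real.log (‖u‖ ^ (2 * (k + 1)) + ‖v‖ ^ (2 * (k + 1))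
          + (‖u‖ * ‖v‖) ^ 2) + C := by
  refine ⟨((k : ℝ) + 1) / 2 * Real.log 2, fun u v _ => ?_⟩
  set a := ‖u‖ with ha
  set b := ‖v‖ with hb
  have ha0 : 0 ≤ a := norm_nonneg u
  have hb0 : 0 ≤ b := norm_nonneg v
  set s := a ^ 2 + b ^ 2 with hs
  have hs0 : 0 ≤ s := by positivity
  set E := a ^ (2 * (k + 1)) + b ^ (2 * (k + 1)) + (a * b) ^ 2 with hE
  rcases eq_or_lt_of_le hs0 with h0 | hpos
  · have ha' : a = 0 := by nlinarith [sq_nonneg a, sq_nonneg b]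
    have hb' : b = 0 := by nlinarith [sq_nonneg a, sq_nonneg b]
    have hkk : 2 * (k + 1) ≠ 0 := by omega
    simp [hE, ha', hb', ← h0, Real.sqrt_zero, Real.log_zero, zero_pow hkk]
    positivity
  · -- s > 0, so at least one of a, b positive, so E > 0
    have hEpos : 0 < E := by
      rcases lt_or_ge 0 a with hA | hA
      · have : 0 < a ^ (2 * (k + 1)) := by positivity
        have h1 : 0 ≤ b ^ (2 * (k + 1)) := by positivity
        have h2 : 0 ≤ (a * b) ^ 2 := by positivity
        linarith
      · have ha' : a = 0 := le_antisymm hA ha0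
        have hB : 0 < b := by nlinarith [sq_nonneg b]
        have : 0 < b ^ (2 * (k + 1)) := by positivity
        have h1 : 0 ≤ a ^ (2 * (k + 1)) := by positivity
        have h2 : 0 ≤ (a * b) ^ 2 := by positivity
        linarith
    have key : s ^ (k + 1) ≤ 2 ^ (k + 1) * E := by
      have hmax : s ≤ 2 * max (a ^ 2) (b ^ 2) := by
        rcases le_total (a ^ 2) (b ^ 2) with h | h
        · rw [max_eq_right h]; linarith
        · rw [max_eq_left h]; linarith
      have h1 : s ^ (k + 1) ≤ (2 * max (a ^ 2) (b ^ 2)) ^ (k + 1) :=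
        pow_le_pow_left₀ hs0 hmax _
      have h2 : (max (a ^ 2) (b ^ 2)) ^ (k + 1) ≤ a ^ (2 * (k + 1)) + b ^ (2 * (k + 1)) := by
        rcases le_total (a ^ 2) (b ^ 2) with h | h
        · rw [max_eq_right h, ← pow_mul]
          have : 0 ≤ a ^ (2 * (k + 1)) := by positivity
          linarith
        · rw [max_eq_left h, ← pow_mul]
          have : 0 ≤ b ^ (2 * (k + 1)) := by positivity
          linarith
      have hab : 0 ≤ (a * b) ^ 2 := by positivity
      calc s ^ (k + 1) ≤ (2 * max (a ^ 2) (b ^ 2)) ^ (k + 1) := h1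
        _ = 2 ^ (k + 1) * (max (a ^ 2) (b ^ 2)) ^ (k + 1) := by rw [mul_pow]
        _ ≤ 2 ^ (k + 1) * (a ^ (2 * (k + 1)) + b ^ (2 * (k + 1))) := by
            have : (0:ℝ) ≤ 2 ^ (k + 1) := by positivity
            exact mul_le_mul_of_nonneg_left h2 this
        _ ≤ 2 ^ (k + 1) * E := by
            rw [hE]
            have : (0:ℝ) ≤ 2 ^ (k + 1) := by positivity
            nlinarith
    have hlog : Real.log (s ^ (k + 1)) ≤ Real.log (2 ^ (k + 1) * E) :=
      Real.log_le_log (by positivity) key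
    rw [Real.log_pow, Real.log_mul (by positivity) (ne_of_gt hEpos), Real.log_pow] at hlog
    rw [Real.log_sqrt hs0]
    push_cast at hlog ⊢
    linarith
end
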